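/- Suppose at world u₀ of a Kripke model on a reflexive transitive frame there is an independent pair of a button b and a switch s: ¬□b and ¬s hold at u₀; necessarily ◇□b; and necessarily, s can be switched on or off without pushing b and b can be pushed without changing s. Then the axiom Dm: □(□(φ→□φ)→φ) → (◇□φ→φ) fails at u₀ for φ = □b ∨ s. -/
import Mathlib


/-- Modal formulas over propositional variables of type `α`. -/
inductive ModalFormula (α : Type) : Type
  | var : α → ModalFormula α
  | fls : ModalFormula α
  | imp : ModalFormula α → ModalFormula α → ModalFormula α
  | box : ModalFormula α → ModalFormula α

namespace ModalFormula

variable {α : Type}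

def neg (φ : ModalFormula α) : ModalFormula α := φ.imp fls
def dia (φ : ModalFormula α) : ModalFormula α := (φ.neg.box).neg
def conj (φ ψ : ModalFormula α) : ModalFormula α := (φ.imp ψ.neg).neg
def disj (φ ψ : ModalFormula α) : ModalFormula α := φ.neg.imp ψ

/-- Kripke satisfaction at a world, for a model with worlds `W`,
accessibility `R` and valuation `V`. -/
def sat {W : Type} (R : W → W → Prop) (V : α → W → Prop) : W → ModalFormula α → Prop
  | w, var p => V p w
  | _, fls => False
  | w, imp φ ψ => sat R V w φ → sat R V w ψ
  | w, box φ => ∀ v, R w v → sat R V v φ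

end ModalFormula

open ModalFormula


section Helpers
variable {W α : Type} (R : W → W → Prop) (V : α → W → Prop) (w : W)

lemma sat_neg (φ : ModalFormula α) :
    sat R V w φ.neg ↔ ¬ sat R V w φ := by simp [neg, sat]

lemma sat_dia (φ : ModalFormula α) :
    sat R V w φ.dia ↔ ∃ v, R w v ∧ sat R V v φ := by
  simp only [dia, neg, sat]
  constructor
  · intro h
    by_contra hc
    push_neg at hc
    exact h fun v hv hs => hc v hv hs
  · rintro ⟨v, hv, hs⟩ h
    exact h v hv hs

lemma sat_conj (φ ψ : ModalFormula α) :
    sat R V w (φ.conj ψ) ↔ sat R V w φ ∧ sat R V w ψ := by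
  simp only [conj, sat_neg, sat]
  tauto

lemma sat_disj (φ ψ : ModalFormula α) :
    sat R V w (φ.disj ψ) ↔ sat R V w φ ∨ sat R V w ψ := by
  simp only [disj, sat_neg, sat]
  tauto

end Helpers

/-- with an independent button b and switch s at u₀ on a
reflexive transitive frame (¬□b and ¬s at u₀; necessarily ◇□b; and from any
accessible world with ¬□b, the switch s can be turned on or off keeping ¬□b),
the axiom Dm fails at u₀ for φ = □b ∨ s: the hypothesis
□(□(φ→□φ)→φ) holds, ◇□φ holds, yet φ fails at u₀. -/
theorem Dm_fails_with_button_and_switch {W α : Type}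
    (R : W → W → Prop) (hrefl : Reflexive R) (htrans : Transitive R)
    (V : α → W → Prop) (u₀ : W) (b s : ModalFormula α)
    (hb : ¬ ModalFormula.sat R V u₀ (b.box))
    (hs : ¬ ModalFormula.sat R V u₀ s)
    (hnecpush : ModalFormula.sat R V u₀ ((b.box.dia).box))
    (hindep : ModalFormula.sat R V u₀
      (((b.box.neg).imp
        ((s.conj (b.box.neg)).dia.conj ((s.neg.conj (b.box.neg)).dia))).box)) :
    ModalFormula.sat R V u₀
        (((((b.box.disj s).imp ((b.box.disj s).box)).box).imp
            (b.box.disj s)).box) ∧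
      ModalFormula.sat R V u₀ (((b.box.disj s).box).dia) ∧
      ¬ ModalFormula.sat R V u₀ (b.box.disj s) := by

  set φ := b.box.disj s with hφ
  have hφ' : ∀ w, sat R V w φ ↔ sat R V w b.box ∨ sat R V w s :=
    fun w => sat_disj R V w _ _
  refine ⟨?_, ?_, ?_⟩
  · -- (i) □(□(φ→□φ)→φ) at u₀
    intro v hv
    intro H
    by_cases hbv : sat R V v b.box
    · exact (hφ' v).mpr (Or.inl hbv)
    · -- ¬□b at v : derive contradiction from H
      exfalso
      have hi := hindep v hv
      rw [ModalFormula.sat, sat_conj, sat_dia, sat_dia] at hi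
      obtain ⟨⟨x, hvx, hx⟩, -⟩ := hi ((sat_neg R V v _).mpr hbv)
      rw [sat_conj, sat_neg] at hx
      obtain ⟨hxs, hxnb⟩ := hx
      -- φ holds at x
      have hφx : sat R V x φ := (hφ' x).mpr (Or.inr hxs)
      have hboxφx : sat R V x φ.box := H x hvx hφx
      -- now flip switch off at x
      have hix := hindep x (htrans hv hvx)
      rw [ModalFormula.sat, sat_conj, sat_dia, sat_dia] at hix
      obtain ⟨-, ⟨y, hxy, hy⟩⟩ := hix ((sat_neg R V x _).mpr hxnb)
      rw [sat_conj, sat_neg, sat_neg] at hy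
      obtain ⟨hys, hynb⟩ := hy
      have := (hφ' y).mp (hboxφx y hxy)
      tauto
  · -- (ii) ◇□φ at u₀
    have hp := hnecpush u₀ (hrefl u₀)
    rw [sat_dia] at hp
    obtain ⟨v, hv, hbv⟩ := hp
    rw [sat_dia]
    refine ⟨v, hv, ?_⟩
    intro w hw
    refine (hφ' w).mpr (Or.inl ?_)
    intro z hz
    exact hbv z (htrans hw hz)
  · -- (iii) ¬φ at u₀
    intro h
    rcases (hφ' u₀).mp h with h | h
    · exact hb h
    · exact hs h
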